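/- Let Q_1 be a real symmetric positive semidefinite n×n matrix with factorization Q_1 = R_1^T R_1, let c_1 ∈ ℝ^n and b_1 ∈ ℝ. Then for any x ∈ ℝ^n, the inequality x^T Q_1 x + 2 c_1^T x ≤ b_1 holds if and only if the block matrix [[I, -R_1 x],[-(R_1 x)^T, -2 c_1^T x + b_1]] is positive semidefinite. -/

import Mathlib

open Matrix BigOperators

/-! The block matrix has identity upper-left block, so by the Schur complement criterion it is
positive semidefinite iff the `1 × 1` complement `b₁ - 2 c₁ᵀx - ‖R₁x‖²` is nonnegative, and
`‖R₁x‖² = xᵀQ₁x`. -/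

/-- The block matrix `[[I, -R₁x],[-(R₁x)ᵀ, -2c₁ᵀx + b₁]]`. -/
def schurBlock {k n : ℕ} (R : Matrix (Fin k) (Fin n) ℝ) (c : Fin n → ℝ)
    (b : ℝ) (x : Fin n → ℝ) : Matrix (Fin k ⊕ Unit) (Fin k ⊕ Unit) ℝ :=
  Matrix.of fun i j =>
    match i, j with
    | Sum.inl i, Sum.inl j => (1 : Matrix (Fin k) (Fin k) ℝ) i j
    | Sum.inl i, Sum.inr _ => -(R.mulVec x i)
    | Sum.inr _, Sum.inl j => -(R.mulVec x j)
    | Sum.inr _, Sum.inr _ => -2 * (c ⬝ᵥ x) + b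

namespace Matrix

variable {ι m R : Type*} [CommRing R] [PartialOrder R] [StarRing R] [StarOrderedRing R]

theorem posSemidef_of_const_iff [Unique ι] (a : R) :
    (of fun _ _ : ι => a).PosSemidef ↔ 0 ≤ a := by
  have hdiag : (of fun _ _ : ι => a) = diagonal fun _ => a := by
    ext i j
    simp [Subsingleton.elim i j]
  simp [hdiag]

theorem posSemidef_fromBlocks_one_replicateCol_iff [Fintype m] [DecidableEq m] [NoZeroDivisors R]
    (v : m → R) (d : R) :
    (fromBlocks 1 (replicateCol Unit v) (replicateRow Unit (star v)) (of fun _ _ => d)).PosSemidef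
      ↔ star v ⬝ᵥ v ≤ d := by
  let _ : Invertible (1 : Matrix m m R) := invertibleOne
  rw [← conjTranspose_replicateCol, PosDef.fromBlocks₁₁ _ _ PosDef.one, inv_one, Matrix.mul_one,
    conjTranspose_replicateCol, replicateRow_mul_replicateCol, of_sub_of]
  exact (posSemidef_of_const_iff (d - star v ⬝ᵥ v)).trans sub_nonneg

end Matrix

theorem Matrix.dotProduct_transpose_mul_mulVec {m n S : Type*} [Fintype m] [Fintype n]
    [CommSemiring S] (A : Matrix m n S) (x : n → S) :
    x ⬝ᵥ (Aᵀ * A) *ᵥ x = A *ᵥ x ⬝ᵥ A *ᵥ x := by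
  rw [← mulVec_mulVec, dotProduct_mulVec, vecMul_transpose]

theorem schurBlock_eq_fromBlocks {k n : ℕ} (R : Matrix (Fin k) (Fin n) ℝ) (c : Fin n → ℝ)
    (b : ℝ) (x : Fin n → ℝ) :
    schurBlock R c b x = fromBlocks 1 (replicateCol Unit (-(R *ᵥ x)))
      (replicateRow Unit (star (-(R *ᵥ x)))) (of fun _ _ => -2 * (c ⬝ᵥ x) + b) := by
  ext (i | i) (j | j) <;> simp [schurBlock]

theorem stmt_2 (n k : ℕ) (Q₁ : Matrix (Fin n) (Fin n) ℝ)
    (R₁ : Matrix (Fin k) (Fin n) ℝ) (hQ : Q₁ = R₁ᵀ * R₁)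
    (c₁ : Fin n → ℝ) (b₁ : ℝ) (x : Fin n → ℝ) :
    x ⬝ᵥ Q₁.mulVec x + 2 * (c₁ ⬝ᵥ x) ≤ b₁ ↔
      (schurBlock R₁ c₁ b₁ x).PosSemidef := by
  rw [schurBlock_eq_fromBlocks, posSemidef_fromBlocks_one_replicateCol_iff, hQ,
    dotProduct_transpose_mul_mulVec, star_trivial, neg_dotProduct_neg]
  constructor <;> intro h <;> linarith
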